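/- arXiv:2408.00330 — 2 statements merged into one kernel-verified Lean document; each statement's English description precedes it below -/
import Mathlib

section
/- Assume the 'No Harm, No Foul' property: for all decisions d, d' on a sensitive group A, d <_u d' implies d <_f d'. Then every unbiased decision d (Pareto maximal with respect to ≤_f on X) restricts on each sensitive group A to a decision d|_A that is Pareto maximal with respect to ≤_u on A. -/
/-! If `d` is Pareto maximal for `≤_f` on `X` but some `d'` strictly `≤_u`-dominates it on a
group `A`, then by No Harm, No Foul `d'` strictly `≤_f`-dominates `d` on `A`. Gluing `d'` on `A`
to `d` off `A` gives a decision whose integrals off `A` agree with those of `d`, so it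
`≤_f`-dominates `d` on all of `X`; maximality of `d` then forces `d' ≤_f d` on `A`, a
contradiction. -/

open MeasureTheory Set

/-- A decision: a measurable map into the probability simplex. -/
def IsDecision {X : Type*} [MeasurableSpace X] (n : ℕ)
    (d : X → (Fin n → ℝ)) : Prop :=
  Measurable d ∧ ∀ x, d x ∈ stdSimplex ℝ (Fin n)

/-- The Pareto preorder on a measurable subset `S`, induced by `p`. -/
def ParetoLEOn {X : Type*} [MeasurableSpace X] (μ : Measure X) (n : ℕ)
    (p : X → (Fin n → ℝ)) (S : Set X) (d d' : X → (Fin n → ℝ)) : Prop :=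
  ∀ i : Fin n, ∫ x in S, d x i * p x i ∂μ ≤ ∫ x in S, d' x i * p x i ∂μ

/-- Strict Pareto domination on `S`. -/
def ParetoLTOn {X : Type*} [MeasurableSpace X] (μ : Measure X) (n : ℕ)
    (p : X → (Fin n → ℝ)) (S : Set X) (d d' : X → (Fin n → ℝ)) : Prop :=
  ParetoLEOn μ n p S d d' ∧ ¬ ParetoLEOn μ n p S d' d

/-- Pareto maximality on `S`. -/
def ParetoMaxOn {X : Type*} [MeasurableSpace X] (μ : Measure X) (n : ℕ)
    (p : X → (Fin n → ℝ)) (S : Set X) (d : X → (Fin n → ℝ)) : Prop :=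
  ∀ d' : X → (Fin n → ℝ), IsDecision n d' →
    ParetoLEOn μ n p S d d' → ParetoLEOn μ n p S d' d

section

variable {X : Type*} [MeasurableSpace X] {μ : Measure X} {n : ℕ}

lemma IsDecision.piecewise {S : Set X} [DecidablePred (· ∈ S)] {d d' : X → Fin n → ℝ}
    (hS : MeasurableSet S) (hd' : IsDecision n d') (hd : IsDecision n d) :
    IsDecision n (S.piecewise d' d) :=
  ⟨hd'.1.piecewise hS hd.1, fun x => by
    by_cases hx : x ∈ S
    · simpa [hx] using hd'.2 x
    · simpa [hx] using hd.2 x⟩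

lemma IsDecision.integrable_mul_apply [IsFiniteMeasure μ] {d p : X → Fin n → ℝ}
    (hd : IsDecision n d) (hp : Measurable p) (hpmem : ∀ x, p x ∈ stdSimplex ℝ (Fin n))
    (i : Fin n) : Integrable (fun x => d x i * p x i) μ := by
  have hmeas : Measurable fun x => d x i * p x i :=
    ((measurable_pi_apply i).comp hd.1).mul ((measurable_pi_apply i).comp hp)
  refine (integrable_const (1 : ℝ)).mono' hmeas.aestronglyMeasurable
    (Filter.Eventually.of_forall fun x => ?_)
  obtain ⟨hd₀, hd₁⟩ := mem_Icc_of_mem_stdSimplex (hd.2 x) i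
  obtain ⟨hp₀, hp₁⟩ := mem_Icc_of_mem_stdSimplex (hpmem x) i
  rw [Real.norm_eq_abs, abs_of_nonneg (mul_nonneg hd₀ hp₀)]
  exact mul_le_one₀ hd₁ hp₀ hp₁

lemma integral_piecewise_mul_apply {S : Set X} [DecidablePred (· ∈ S)] (hS : MeasurableSet S)
    {d d' p : X → Fin n → ℝ} (i : Fin n)
    (hd' : IntegrableOn (fun x => d' x i * p x i) S μ)
    (hd : IntegrableOn (fun x => d x i * p x i) Sᶜ μ) :
    ∫ x, S.piecewise d' d x i * p x i ∂μ =
      ∫ x in S, d' x i * p x i ∂μ + ∫ x in Sᶜ, d x i * p x i ∂μ := by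
  rw [← integral_piecewise hS hd' hd]
  congr 1 with x
  by_cases hx : x ∈ S <;> simp [hx]

lemma paretoLEOn_univ_piecewise_iff [IsFiniteMeasure μ] {p : X → Fin n → ℝ}
    (hp : Measurable p) (hpmem : ∀ x, p x ∈ stdSimplex ℝ (Fin n))
    {S : Set X} [DecidablePred (· ∈ S)]
    (hS : MeasurableSet S) {d d₁ d₂ : X → Fin n → ℝ} (hd : IsDecision n d)
    (hd₁ : IsDecision n d₁) (hd₂ : IsDecision n d₂) :
    ParetoLEOn μ n p univ (S.piecewise d₁ d) (S.piecewise d₂ d) ↔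
      ParetoLEOn μ n p S d₁ d₂ := by
  have hint {g : X → Fin n → ℝ} (hg : IsDecision n g) (i : Fin n) :=
    hg.integrable_mul_apply (μ := μ) hp hpmem i
  refine forall_congr' fun i => ?_
  rw [setIntegral_univ, setIntegral_univ,
    integral_piecewise_mul_apply hS i (hint hd₁ i).integrableOn (hint hd i).integrableOn,
    integral_piecewise_mul_apply hS i (hint hd₂ i).integrableOn (hint hd i).integrableOn,
    add_le_add_iff_right]

lemma ParetoMaxOn.of_univ [IsFiniteMeasure μ] {p : X → Fin n → ℝ} (hp : Measurable p)
    (hpmem : ∀ x, p x ∈ stdSimplex ℝ (Fin n)) {d : X → Fin n → ℝ} (hd : IsDecision n d)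
    (hmax : ParetoMaxOn μ n p univ d) {S : Set X} (hS : MeasurableSet S) :
    ParetoMaxOn μ n p S d := by
  classical
  intro d' hd' hle
  have hglue := paretoLEOn_univ_piecewise_iff (μ := μ) hp hpmem hS hd hd hd'
  have hglue' := paretoLEOn_univ_piecewise_iff (μ := μ) hp hpmem hS hd hd' hd
  rw [piecewise_same] at hglue hglue'
  exact hglue'.1 (hmax _ (hd'.piecewise hS hd) (hglue.2 hle))

end

theorem no_harm_no_foul_implies_affirmative_action_general {X : Type*} [MeasurableSpace X]
    (μ : Measure X) [IsProbabilityMeasure μ] (n m : ℕ)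
    (pu pf : X → (Fin n → ℝ)) (hpf : Measurable pf)
    (hpfmem : ∀ x, pf x ∈ stdSimplex ℝ (Fin n))
    (A : Fin m → Set X) (hAmeas : ∀ k, MeasurableSet (A k))
    (hNHNF : ∀ k : Fin m, ∀ d d' : X → (Fin n → ℝ), IsDecision n d →
      IsDecision n d' → ParetoLTOn μ n pu (A k) d d' → ParetoLTOn μ n pf (A k) d d')
    (d : X → (Fin n → ℝ)) (hd : IsDecision n d)
    (hmax : ParetoMaxOn μ n pf univ d) :
    ∀ k : Fin m, ParetoMaxOn μ n pu (A k) d := by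
  intro k d' hd' hle
  by_contra hnot
  obtain ⟨hle_f, hnot_f⟩ := hNHNF k d d' hd hd' ⟨hle, hnot⟩
  exact hnot_f (hmax.of_univ hpf hpfmem hd (hAmeas k) d' hd' hle_f)

/-- "No Harm, No Foul ⇒ Affirmative Action": under the No Harm, No Foul
assumption, every decision Pareto maximal for `≤_f` on `X` restricts on each
sensitive group to a decision Pareto maximal for `≤_u`. -/
theorem no_harm_no_foul_implies_affirmative_action {X : Type*} [MeasurableSpace X]
    (μ : Measure X) [IsProbabilityMeasure μ] (n m : ℕ)
    (pu pf : X → (Fin n → ℝ)) (hpu : Measurable pu) (hpf : Measurable pf)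
    (hpumem : ∀ x, pu x ∈ stdSimplex ℝ (Fin n))
    (hpfmem : ∀ x, pf x ∈ stdSimplex ℝ (Fin n))
    (A : Fin m → Set X) (hAmeas : ∀ k, MeasurableSet (A k))
    (hAcover : (⋃ k, A k) = univ)
    (hAdisj : Pairwise (Function.onFun Disjoint A))
    (hApos : ∀ k, 0 < μ (A k))
    (hNHNF : ∀ k : Fin m, ∀ d d' : X → (Fin n → ℝ), IsDecision n d →
      IsDecision n d' → ParetoLTOn μ n pu (A k) d d' → ParetoLTOn μ n pf (A k) d d')
    (d : X → (Fin n → ℝ)) (hd : IsDecision n d)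
    (hmax : ParetoMaxOn μ n pf univ d) :
    ∀ k : Fin m, ParetoMaxOn μ n pu (A k) d :=
  no_harm_no_foul_implies_affirmative_action_general μ n m pu pf hpf hpfmem A hAmeas hNHNF d hd hmax
end

section
/- Suppose there exist i ∈ [n] and a positive-measure set S ⊆ X on which p_f(y_i|x) > 0 but p_u(y_i|x) = 0. Then there exists a decision d, Pareto maximal with respect to ≤_f, whose restriction to some sensitive group A with μ(A ∩ S) > 0 is not Pareto maximal with respect to ≤_u on A. In particular, the Affirmative Action assumption fails. -/
open MeasureTheory Set

/-!
Since `pf · i > 0` on `S`, some threshold `ε > 0` leaves a positive-measure part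
`S ∩ {ε ≤ pf · i}`. With weights `ε⁻¹` on label `i` and `1` elsewhere, the vertex decision
choosing `i` there and a measurable argmax of the weighted `pf` elsewhere maximizes a
strictly positive weighted sum of the `≤_f` utilities, hence is `≤_f`-Pareto maximal. Where it
chooses `i`, its `≤_u` utility vanishes because `pu · i = 0`; switching to `pu` itself there
gains `∑ⱼ pu_j² > 0`, strictly improving some label on any group meeting that set in positive
measure, and such a group exists because the groups cover `X`.
-/

section Measure

variable {X : Type*} [MeasurableSpace X] {μ : Measure X}

lemma exists_pos_measure_inter_of_iUnion_eq_univ {ι : Type*} [Countable ι] {A : ι → Set X}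
    (hA : ⋃ k, A k = univ) {T : Set X} (hT : 0 < μ T) : ∃ k, 0 < μ (A k ∩ T) := by
  apply exists_measure_pos_of_not_measure_iUnion_null
  rw [← iUnion_inter, hA, univ_inter]
  exact hT.ne'

lemma exists_pos_measure_inter_setOf_le {f : X → ℝ} {S : Set X} (hf : ∀ x ∈ S, 0 < f x)
    (hS : 0 < μ S) : ∃ ε > 0, 0 < μ (S ∩ {x | ε ≤ f x}) := by
  have hcover : S ⊆ ⋃ m : ℕ, S ∩ {x | 1 / (m + 1 : ℝ) ≤ f x} := fun x hx ↦
    mem_iUnion.2 <| (exists_nat_one_div_lt (hf x hx)).imp fun _ hm ↦ ⟨hx, hm.le⟩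
  obtain ⟨m, hm⟩ :=
    exists_measure_pos_of_not_measure_iUnion_null (hS.trans_le (measure_mono hcover)).ne'
  exact ⟨_, Nat.one_div_pos_of_nat, hm⟩

lemma setIntegral_lt_setIntegral_of_le_of_lt_on {f g : X → ℝ} {s t : Set X}
    (hf : IntegrableOn f s μ) (hg : IntegrableOn g s μ) (hle : f ≤ g)
    (hlt : ∀ x ∈ t, f x < g x) (ht : 0 < μ (t ∩ s)) :
    ∫ x in s, f x ∂μ < ∫ x in s, g x ∂μ := by
  rw [← sub_pos, ← integral_sub hg hf,
    integral_pos_iff_support_of_nonneg (fun x ↦ sub_nonneg.2 (hle x)) (hg.sub hf)]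
  refine ht.trans_le ((Measure.le_restrict_apply s t).trans (measure_mono fun x hx ↦ ?_))
  exact (sub_pos.2 (hlt x hx)).ne'

lemma exists_measurable_argmax {ι : Type*} [Fintype ι] [Nonempty ι] [MeasurableSpace ι]
    [MeasurableSingletonClass ι] {g : X → ι → ℝ} (hg : Measurable g) :
    ∃ σ : X → ι, Measurable σ ∧ ∀ x j, g x j ≤ g x (σ x) := by
  have eval_comp : ∀ σ : X → ι, Measurable σ → Measurable fun x ↦ g x (σ x) := fun σ hσ ↦
    (measurable_from_prod_countable_left (f := fun q : (ι → ℝ) × ι ↦ q.1 q.2)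
      measurable_pi_apply).comp (hg.prodMk hσ)
  suffices ∀ s : Finset ι, s.Nonempty →
      ∃ σ : X → ι, Measurable σ ∧ ∀ x, ∀ j ∈ s, g x j ≤ g x (σ x) by
    obtain ⟨σ, hσ, hmax⟩ := this Finset.univ Finset.univ_nonempty
    exact ⟨σ, hσ, fun x j ↦ hmax x j (Finset.mem_univ j)⟩
  intro s hs
  induction hs using Finset.Nonempty.cons_induction with
  | singleton a => exact ⟨fun _ ↦ a, measurable_const, fun x j hj ↦ by simp_all⟩
  | cons a s _ _ ih =>
    obtain ⟨σ, hσ, hmax⟩ := ih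
    refine ⟨fun x ↦ if g x (σ x) ≤ g x a then a else σ x,
      Measurable.ite (measurableSet_le (eval_comp σ hσ) hg.eval) measurable_const hσ,
      fun x j hj ↦ ?_⟩
    dsimp only
    rcases Finset.mem_cons.1 hj with rfl | hj
    · split_ifs with h
      · exact le_rfl
      · exact (not_le.1 h).le
    · split_ifs with h
      · exact (hmax x j hj).trans h
      · exact hmax x j hj

end Measure

lemma sum_mul_le_sum_single_mul {ι : Type*} [Fintype ι] [DecidableEq ι] {c h : ι → ℝ}
    (hc : c ∈ stdSimplex ℝ ι) {σ : ι} (hσ : ∀ j, h j ≤ h σ) :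
    ∑ j, c j * h j ≤ ∑ j, (Pi.single σ 1 : ι → ℝ) j * h j := by
  calc ∑ j, c j * h j ≤ ∑ j, c j * h σ :=
        Finset.sum_le_sum fun j _ ↦ mul_le_mul_of_nonneg_left (hσ j) (hc.1 j)
    _ = ∑ j, (Pi.single σ 1 : ι → ℝ) j * h j := by
        simp [Pi.single_apply, ← Finset.sum_mul, hc.2]

lemma le_of_forall_le_of_sum_mul_le {ι : Type*} [Fintype ι] {w a b : ι → ℝ}
    (hw : ∀ j, 0 < w j) (hab : ∀ j, a j ≤ b j) (h : ∑ j, w j * b j ≤ ∑ j, w j * a j) (j : ι) :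
    b j ≤ a j := by
  by_contra! hlt
  have := Finset.sum_lt_sum (fun k _ ↦ mul_le_mul_of_nonneg_left (hab k) (hw k).le)
    ⟨j, Finset.mem_univ j, mul_lt_mul_of_pos_left hlt (hw j)⟩
  linarith

section Pareto

variable {X : Type*} [MeasurableSpace X] {μ : Measure X} [IsFiniteMeasure μ] {n : ℕ}
  {p : X → Fin n → ℝ}

lemma IsDecision.integrable_mul {d : X → Fin n → ℝ} (hd : IsDecision n d) (hp : Measurable p)
    (hpmem : ∀ x, p x ∈ stdSimplex ℝ (Fin n)) (j : Fin n) :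
    Integrable (fun x ↦ d x j * p x j) μ := by
  refine .of_bound (hd.1.eval.mul hp.eval).aestronglyMeasurable 1 (.of_forall fun x ↦ ?_)
  have hdj := mem_Icc_of_mem_stdSimplex (hd.2 x) j
  have hpj := mem_Icc_of_mem_stdSimplex (hpmem x) j
  rw [Real.norm_eq_abs, abs_le]
  constructor <;> nlinarith [hdj.1, hdj.2, hpj.1, hpj.2]

lemma paretoMaxOn_of_maximizes_weighted_sum (hp : Measurable p)
    (hpmem : ∀ x, p x ∈ stdSimplex ℝ (Fin n)) {w : Fin n → ℝ} (hw : ∀ j, 0 < w j)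
    {d : X → Fin n → ℝ} (hd : IsDecision n d)
    (hmax : ∀ x, ∀ c ∈ stdSimplex ℝ (Fin n),
      ∑ j, c j * (w j * p x j) ≤ ∑ j, d x j * (w j * p x j))
    (S : Set X) : ParetoMaxOn μ n p S d := by
  have weighted : ∀ d', IsDecision n d' → Integrable (fun x ↦ ∑ j, d' x j * (w j * p x j))
      (μ.restrict S) ∧ ∑ j, w j * ∫ x in S, d' x j * p x j ∂μ =
        ∫ x in S, ∑ j, d' x j * (w j * p x j) ∂μ := by
    intro d' hd'
    have hint : ∀ j, Integrable (fun x ↦ d' x j * (w j * p x j)) (μ.restrict S) := fun j ↦ by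
      simpa only [mul_left_comm] using (hd'.integrable_mul hp hpmem j).const_mul (w j)
    refine ⟨integrable_finsetSum _ fun j _ ↦ hint j, ?_⟩
    rw [integral_finsetSum _ fun j _ ↦ hint j]
    simp only [mul_left_comm _ (w _), integral_const_mul]
  intro d' hd' hle
  refine le_of_forall_le_of_sum_mul_le hw hle ?_
  rw [(weighted d' hd').2, (weighted d hd).2]
  exact integral_mono (weighted d' hd').1 (weighted d hd).1 fun x ↦ hmax x (d' x) (hd'.2 x)

lemma exists_paretoMaxOn_eq_single_on (hp : Measurable p)
    (hpmem : ∀ x, p x ∈ stdSimplex ℝ (Fin n)) (i : Fin n) {ε : ℝ} (hε : 0 < ε) {U : Set X}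
    (hU : MeasurableSet U) (hpU : ∀ x ∈ U, ε ≤ p x i) :
    ∃ d : X → Fin n → ℝ, IsDecision n d ∧ (∀ S, ParetoMaxOn μ n p S d) ∧
      ∀ x ∈ U, d x = Pi.single i 1 := by
  classical
  have : Nonempty (Fin n) := ⟨i⟩
  -- With `w i = ε⁻¹`, label `i` earns weighted utility `≥ 1 ≥ p x j` on `U`.
  set w : Fin n → ℝ := fun j ↦ if j = i then ε⁻¹ else 1
  have hw : ∀ j, 0 < w j := fun j ↦ by unfold w; split_ifs <;> positivity
  have hi_max : ∀ x ∈ U, ∀ j, w j * p x j ≤ w i * p x i := fun x hx j ↦ by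
    have hone : 1 ≤ ε⁻¹ * p x i := (one_le_inv_mul₀ hε).2 (hpU x hx)
    by_cases hj : j = i
    · rw [hj]
    · simpa [w, hj] using (mem_Icc_of_mem_stdSimplex (hpmem x) j).2.trans hone
  obtain ⟨σ, hσ, hσ_max⟩ := exists_measurable_argmax (g := fun x j ↦ w j * p x j)
    (measurable_pi_lambda _ fun j ↦ measurable_const.mul hp.eval)
  set d : X → Fin n → ℝ := U.piecewise (fun _ ↦ Pi.single i 1) fun x ↦ Pi.single (σ x) 1
  have hd : IsDecision n d := by
    have hvertex := measurable_of_finite fun j : Fin n ↦ (Pi.single j 1 : Fin n → ℝ)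
    refine ⟨measurable_const.piecewise hU (hvertex.comp hσ), fun x ↦ ?_⟩
    by_cases hx : x ∈ U <;> simp [d, hx, single_mem_stdSimplex]
  refine ⟨d, hd, paretoMaxOn_of_maximizes_weighted_sum hp hpmem hw hd fun x c hc ↦ ?_,
    fun x hx ↦ by simp [d, hx]⟩
  by_cases hx : x ∈ U
  · simpa [d, hx] using sum_mul_le_sum_single_mul hc (hi_max x hx)
  · simpa [d, hx] using sum_mul_le_sum_single_mul hc (hσ_max x)

lemma not_paretoMaxOn_of_utility_eq_zero_on (hp : Measurable p)
    (hpmem : ∀ x, p x ∈ stdSimplex ℝ (Fin n)) {d : X → Fin n → ℝ} (hd : IsDecision n d)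
    {U : Set X} (hU : MeasurableSet U) (hdU : ∀ x ∈ U, ∀ j, d x j * p x j = 0) {A : Set X}
    (hAU : 0 < μ (A ∩ U)) : ¬ ParetoMaxOn μ n p A d := by
  classical
  set d' := U.piecewise p d
  have hd' : IsDecision n d' := ⟨hp.piecewise hU hd.1, fun x ↦ by
    by_cases hx : x ∈ U <;> simp [d', hx, hpmem x, hd.2 x]⟩
  have hle : ∀ j x, d x j * p x j ≤ d' x j * p x j := fun j x ↦ by
    by_cases hx : x ∈ U
    · simpa [d', hx, hdU x hx j] using mul_self_nonneg (p x j)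
    · simp [d', hx]
  have hcover : ⋃ j, {x | 0 < p x j} = univ := eq_univ_of_forall fun x ↦ by
    obtain ⟨j, -, hj⟩ := Finset.exists_lt_of_sum_lt (f := 0) (g := p x) (s := Finset.univ) <| by
      simp [(hpmem x).2]
    exact mem_iUnion.2 ⟨j, hj⟩
  obtain ⟨j, hj⟩ := exists_pos_measure_inter_of_iUnion_eq_univ hcover hAU
  have hlt : ∫ x in A, d x j * p x j ∂μ < ∫ x in A, d' x j * p x j ∂μ := by
    refine setIntegral_lt_setIntegral_of_le_of_lt_on (hd.integrable_mul hp hpmem j)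
      (hd'.integrable_mul hp hpmem j) (hle j) (t := {x | 0 < p x j} ∩ U) ?_ ?_
    · rintro x ⟨hpos, hx⟩
      simpa [d', hx, hdU x hx j] using mul_pos (α := ℝ) hpos hpos
    · simpa only [inter_assoc, inter_comm A, inter_left_comm] using hj
  intro hmax
  have hge := hmax d' hd' fun j ↦ setIntegral_mono (hd.integrable_mul hp hpmem j)
    (hd'.integrable_mul hp hpmem j) (hle j)
  exact (hge j).not_gt hlt

end Pareto

theorem affirmative_action_fails_of_support_violation_general {X : Type*} [MeasurableSpace X]
    (μ : Measure X) [IsProbabilityMeasure μ] (n m : ℕ)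
    (pu pf : X → (Fin n → ℝ)) (hpu : Measurable pu) (hpf : Measurable pf)
    (hpumem : ∀ x, pu x ∈ stdSimplex ℝ (Fin n))
    (hpfmem : ∀ x, pf x ∈ stdSimplex ℝ (Fin n))
    (A : Fin m → Set X)
    (hAcover : (⋃ k, A k) = univ)
    (i : Fin n) (S : Set X) (hSpos : 0 < μ S)
    (hS : ∀ x ∈ S, 0 < pf x i ∧ pu x i = 0) :
    ∃ d : X → (Fin n → ℝ), IsDecision n d ∧ ParetoMaxOn μ n pf univ d ∧
      ∃ k : Fin m, 0 < μ (A k ∩ S) ∧ ¬ ParetoMaxOn μ n pu (A k) d := by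
  obtain ⟨ε, hε, hSε⟩ := exists_pos_measure_inter_setOf_le (fun x hx ↦ (hS x hx).1) hSpos
  obtain ⟨k, hk⟩ := exists_pos_measure_inter_of_iUnion_eq_univ hAcover hSε
  set U := {x | ε ≤ pf x i ∧ pu x i = 0}
  have hU : MeasurableSet U :=
    (measurableSet_le measurable_const hpf.eval).inter
      (measurableSet_eq_fun hpu.eval measurable_const)
  have hSU : S ∩ {x | ε ≤ pf x i} ⊆ U := fun x hx ↦ ⟨hx.2, (hS x hx.1).2⟩
  obtain ⟨d, hd, hd_max, hdU⟩ :=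
    exists_paretoMaxOn_eq_single_on (μ := μ) hpf hpfmem i hε hU fun x hx ↦ hx.1
  have hd_null : ∀ x ∈ U, ∀ j, d x j * pu x j = 0 := fun x hx j ↦ by
    rcases eq_or_ne j i with rfl | hj
    · simp [hx.2]
    · simp [hdU x hx, hj]
  refine ⟨d, hd, hd_max univ, k,
    hk.trans_le (measure_mono (inter_subset_inter_right _ inter_subset_left)),
    not_paretoMaxOn_of_utility_eq_zero_on hpu hpumem hd hU hd_null
      (hk.trans_le (measure_mono (inter_subset_inter_right _ hSU)))⟩

/-- If on a positive-measure set `S` some label has positive fair probability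
but zero unfair probability, then some `≤_f`-maximal decision fails to be
`≤_u`-maximal on a sensitive group intersecting `S`: Affirmative Action fails. -/
theorem affirmative_action_fails_of_support_violation {X : Type*} [MeasurableSpace X]
    (μ : Measure X) [IsProbabilityMeasure μ] (n m : ℕ)
    (pu pf : X → (Fin n → ℝ)) (hpu : Measurable pu) (hpf : Measurable pf)
    (hpumem : ∀ x, pu x ∈ stdSimplex ℝ (Fin n))
    (hpfmem : ∀ x, pf x ∈ stdSimplex ℝ (Fin n))
    (A : Fin m → Set X) (hAmeas : ∀ k, MeasurableSet (A k))
    (hAcover : (⋃ k, A k) = univ)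
    (hAdisj : Pairwise (Function.onFun Disjoint A))
    (hApos : ∀ k, 0 < μ (A k))
    (i : Fin n) (S : Set X) (hSmeas : MeasurableSet S) (hSpos : 0 < μ S)
    (hS : ∀ x ∈ S, 0 < pf x i ∧ pu x i = 0) :
    ∃ d : X → (Fin n → ℝ), IsDecision n d ∧ ParetoMaxOn μ n pf univ d ∧
      ∃ k : Fin m, 0 < μ (A k ∩ S) ∧ ¬ ParetoMaxOn μ n pu (A k) d :=
  affirmative_action_fails_of_support_violation_general μ n m pu pf hpu hpf hpumem hpfmem A hAcover
    i S hSpos hS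
end
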